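/- Let (Ω, F, P) be a probability space, let Y : Ω → E be a random variable with values in a standard Borel space E generating the sub-σ-algebra G = σ(Y), and let X : Ω → ℝ be a real random variable whose regular conditional distribution given Y is almost surely the Gaussian measure on ℝ with mean m(Y) and variance v, where m : E → ℝ is measurable and v > 0 is constant. Let σ > 0, K > 0, k ∈ [0, 1). Let S_i, V^k_i, π, π_prev be G-measurable integrable real random variables with S_i > 0 almost surely, let a : E → ℝ be measurable with a(Y) > 0 almost surely, set S_{i+1} = a(Y)·exp(σX), and assume S_{i+1}, π·S_{i+1} and (S_{i+1} − K)⁺ are integrable. Define V^k_{i+1} = V^k_i + π·(S_{i+1} − S_i) − k·S_i·|π − π_prev|, Ŝ = a(Y)·exp(σ·m(Y) + σ²v/2), d⁻ = (ln(a(Y)/K) + σ·m(Y))/(σ√v), and d⁺ = d⁻ + σ√v. Then E[V^k_{i+1} | G] = E[(S_{i+1} − K)⁺ | G] almost surely if and only if, almost surely, π·(Ŝ − S_i) = Ŝ·Φ(d⁺)/exp(0)·1 − K·Φ(d⁻) − V^k_i + k·S_i·|π − π_prev|, i.e. π·(Ŝ − S_i) = a(Y)·exp(σ·m(Y) + σ²v/2)·Φ(d⁺)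 − K·Φ(d⁻) − V^k_i + k·S_i·|π − π_prev|, where Φ is the standard normal cumulative distribution function. -/

import Mathlib

/-!
Conditioning on `σ(Y)` freezes `Vk, π, π_prev, S_i` and `a(Y)`, while `X` becomes `N(m(Y), v)`.
The exponential tilt `e^{σx} N(μ, v)(dx) = e^{σμ + σ²v/2} N(μ + σv, v)(dx)` gives both
`E[S_{i+1} | G] = Ŝ` and the Black–Scholes formula `E[(S_{i+1} - K)⁺ | G] = Ŝ Φ(d⁺) - K Φ(d⁻)`;
taking out what is known turns the hedging condition into the pointwise equation. The
transaction-cost term need not be integrable, but then neither side holds: `E[V^k_{i+1} | G]` is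
`0` by convention whereas the call price is positive, and the pointwise equation would make the
term integrable.
-/

open MeasureTheory ProbabilityTheory NNReal

/-- The cumulative distribution function `Φ` of the standard normal law. -/
noncomputable def stdNormalCDF (x : ℝ) : ℝ := cdf (gaussianReal 0 1) x

open Real Set

section Gaussian

variable {μ : ℝ} {v : ℝ≥0}

lemma gaussianPDFReal_mul_exp_mul (μ : ℝ) (v : ℝ≥0) (t x : ℝ) :
    gaussianPDFReal μ v x * exp (t * x)
      = exp (μ * t + v * t ^ 2 / 2) * gaussianPDFReal (μ + v * t) v x := by
  rcases eq_or_ne v 0 with rfl | hv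
  · simp [gaussianPDFReal_zero_var]
  have hv' : (v : ℝ) ≠ 0 := mod_cast hv
  rw [gaussianPDFReal, gaussianPDFReal, mul_assoc, ← exp_add, mul_left_comm, ← exp_add]
  congr 2
  field_simp
  ring

lemma tilted_mul_gaussianReal (hv : v ≠ 0) (t : ℝ) :
    (gaussianReal μ v).tilted (t * ·) = gaussianReal (μ + v * t) v := by
  have hmgf : ∫ x, exp (t * x) ∂gaussianReal μ v = exp (μ * t + v * t ^ 2 / 2) :=
    congrFun mgf_fun_id_gaussianReal t
  rw [Measure.tilted, hmgf, gaussianReal_of_var_ne_zero _ hv, gaussianReal_of_var_ne_zero _ hv,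
    ← withDensity_mul _ (measurable_gaussianPDF μ v) (by fun_prop)]
  congr 1
  funext x
  rw [Pi.mul_apply, gaussianPDF, gaussianPDF, ← ENNReal.ofReal_mul (gaussianPDFReal_nonneg _ _ _),
    mul_div_assoc', gaussianPDFReal_mul_exp_mul, mul_div_cancel_left₀ _ (exp_pos _).ne']

lemma setIntegral_exp_mul_gaussianReal (hv : v ≠ 0) (t : ℝ) (s : Set ℝ) :
    ∫ x in s, exp (t * x) ∂gaussianReal μ v
      = exp (μ * t + v * t ^ 2 / 2) * (gaussianReal (μ + v * t) v).real s := by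
  have hmgf : ∫ x, exp (t * x) ∂gaussianReal μ v = exp (μ * t + v * t ^ 2 / 2) :=
    congrFun mgf_fun_id_gaussianReal t
  rw [← tilted_mul_gaussianReal hv, measureReal_def, tilted_apply_eq_ofReal_integral _ s, hmgf,
    integral_div, ENNReal.toReal_ofReal (by positivity), mul_div_cancel₀ _ (exp_pos _).ne']

lemma map_gaussianReal_standardize (hv : v ≠ 0) :
    (gaussianReal μ v).map (fun x ↦ (μ - x) / √v) = gaussianReal 0 1 := by
  have hcomp : (fun x ↦ (μ - x) / √v) = (· / √v) ∘ (μ - ·) := rfl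
  rw [hcomp, ← Measure.map_map (by fun_prop) (by fun_prop), gaussianReal_map_const_sub,
    gaussianReal_map_div_const, sub_self, zero_div]
  congr
  ext
  simp [Real.sq_sqrt v.coe_nonneg, hv]

lemma gaussianReal_real_Ici (hv : v ≠ 0) (c : ℝ) :
    (gaussianReal μ v).real (Ici c) = stdNormalCDF ((μ - c) / √v) := by
  have hsqrt : 0 < √(v : ℝ) := Real.sqrt_pos.2 (mod_cast pos_iff_ne_zero.2 hv)
  have hpre : (fun x ↦ (μ - x) / √v) ⁻¹' Iic ((μ - c) / √v) = Ici c := by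
    ext x
    simp only [mem_preimage, mem_Iic, mem_Ici, div_le_div_iff_of_pos_right hsqrt,
      sub_le_sub_iff_left]
  rw [stdNormalCDF, cdf_eq_real, ← map_gaussianReal_standardize (μ := μ) hv,
    map_measureReal_apply (by fun_prop) measurableSet_Iic, hpre]

lemma le_mul_exp_mul_iff {a σ K x : ℝ} (ha : 0 < a) (hσ : 0 < σ) (hK : 0 < K) :
    K ≤ a * exp (σ * x) ↔ log (K / a) / σ ≤ x := by
  rw [div_le_iff₀' hσ, log_le_iff_le_exp (div_pos hK ha), div_le_iff₀' ha]

lemma lt_mul_exp_mul_iff {a σ K x : ℝ} (ha : 0 < a) (hσ : 0 < σ) (hK : 0 < K) :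
    K < a * exp (σ * x) ↔ log (K / a) / σ < x := by
  rw [div_lt_iff₀' hσ, log_lt_iff_lt_exp (div_pos hK ha), div_lt_iff₀' ha]

noncomputable def gaussianCallPrice (a σ K μ : ℝ) (v : ℝ≥0) : ℝ :=
  a * exp (σ * μ + σ ^ 2 * v / 2) * stdNormalCDF ((log (a / K) + σ * μ) / (σ * √v) + σ * √v)
    - K * stdNormalCDF ((log (a / K) + σ * μ) / (σ * √v))

lemma integrable_max_mul_exp_sub_gaussianReal (a σ K : ℝ) :
    Integrable (fun x ↦ max (a * exp (σ * x) - K) 0) (gaussianReal μ v) :=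
  (((integrable_exp_mul_gaussianReal σ).const_mul a).sub (integrable_const K)).pos_part

lemma integral_max_mul_exp_sub_gaussianReal (hv : v ≠ 0) {a σ K : ℝ} (ha : 0 < a) (hσ : 0 < σ)
    (hK : 0 < K) :
    ∫ x, max (a * exp (σ * x) - K) 0 ∂gaussianReal μ v = gaussianCallPrice a σ K μ v := by
  set c := log (K / a) / σ with hc
  have hpayoff : (fun x ↦ max (a * exp (σ * x) - K) 0)
      = (Ici c).indicator (fun x ↦ a * exp (σ * x) - K) := by
    funext x
    by_cases hx : c ≤ x
    · rw [indicator_of_mem (mem_Ici.2 hx),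
        max_eq_left (sub_nonneg.2 ((le_mul_exp_mul_iff ha hσ hK).2 hx))]
    · rw [indicator_of_notMem (notMem_Ici.2 (not_le.1 hx)),
        max_eq_right (by linarith [(le_mul_exp_mul_iff ha hσ hK).not.2 hx])]
  have hlog : log (K / a) = -log (a / K) := by rw [← log_inv, inv_div]
  have hd : (μ - c) / √v = (log (a / K) + σ * μ) / (σ * √v) := by
    rw [hc, hlog]
    field_simp
    ring
  have hd' : (μ + v * σ - c) / √v = (log (a / K) + σ * μ) / (σ * √v) + σ * √v := by
    rw [← hd]
    field_simp
    rw [Real.sq_sqrt v.coe_nonneg]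
    ring
  rw [hpayoff, integral_indicator measurableSet_Ici,
    integral_sub ((integrable_exp_mul_gaussianReal σ).const_mul a).integrableOn
      (integrable_const K).integrableOn,
    integral_const_mul, setIntegral_exp_mul_gaussianReal hv, setIntegral_const, smul_eq_mul,
    gaussianReal_real_Ici hv, gaussianReal_real_Ici hv, hd, hd', gaussianCallPrice]
  ring_nf

lemma gaussianCallPrice_pos (hv : v ≠ 0) {a σ K : ℝ} (ha : 0 < a) (hσ : 0 < σ) (hK : 0 < K) :
    0 < gaussianCallPrice a σ K μ v := by
  rw [← integral_max_mul_exp_sub_gaussianReal hv ha hσ hK,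
    integral_pos_iff_support_of_nonneg
      (f := fun x ↦ max (a * exp (σ * x) - K) 0) (fun _ ↦ le_max_right _ _)
      (integrable_max_mul_exp_sub_gaussianReal a σ K)]
  have hsupp : Ioi (log (K / a) / σ) ⊆ Function.support fun x ↦ max (a * exp (σ * x) - K) 0 := by
    intro x hx
    have hKx : K < a * exp (σ * x) := (lt_mul_exp_mul_iff ha hσ hK).2 hx
    rw [Function.mem_support, max_eq_left (sub_nonneg.2 hKx.le)]
    exact (sub_pos.2 hKx).ne'
  have hIoi : 0 < gaussianReal μ v (Ioi (log (K / a) / σ)) :=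
    pos_iff_ne_zero.2 fun h ↦ by simpa using gaussianReal_absolutelyContinuous' μ hv h
  exact hIoi.trans_le (measure_mono hsupp)

end Gaussian

section CondExp

variable {Ω E F : Type*} {m0 : MeasurableSpace Ω} {P : Measure Ω} [IsFiniteMeasure P]

lemma condExp_comp_prodMk_ae_eq_integral {mE : MeasurableSpace E} {mF : MeasurableSpace F}
    [StandardBorelSpace F] [Nonempty F] {Y : Ω → E} {X : Ω → F} (hY : Measurable Y)
    (hX : AEMeasurable X P) {κ : E → Measure F}
    (hκ : ∀ᵐ ω ∂P, condDistrib X Y P (Y ω) = κ (Y ω)) {f : E × F → ℝ} (hf : StronglyMeasurable f)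
    (hf_int : Integrable (fun ω ↦ f (Y ω, X ω)) P) :
    P[fun ω ↦ f (Y ω, X ω)|mE.comap Y] =ᵐ[P] fun ω ↦ ∫ x, f (Y ω, x) ∂κ (Y ω) := by
  filter_upwards [condExp_prod_ae_eq_integral_condDistrib hY hX hf hf_int, hκ] with ω h hω
  rw [h, hω]

lemma condExp_add_sub_ae_eq_iff {m : MeasurableSpace Ω} {V Z W T : Ω → ℝ} (hm : m ≤ m0)
    (hV : StronglyMeasurable[m] V) (hV_int : Integrable V P) (hZ_int : Integrable Z P)
    (hW : StronglyMeasurable[m] W) (hT_int : Integrable T P) (hT : ¬T =ᵐ[P] 0) :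
    P[fun ω ↦ V ω + Z ω - W ω|m] =ᵐ[P] T ↔ (fun ω ↦ V ω + P[Z|m] ω - W ω) =ᵐ[P] T := by
  by_cases hW_int : Integrable W P
  · refine Filter.EventuallyEq.congr_left ?_
    filter_upwards [condExp_sub (hV_int.add hZ_int) hW_int m, condExp_add hV_int hZ_int m]
      with ω hsub hadd
    rw [show (fun ω ↦ V ω + Z ω - W ω) = V + Z - W from rfl, hsub, Pi.sub_apply, hadd,
      Pi.add_apply, condExp_of_stronglyMeasurable hm hV hV_int,
      condExp_of_stronglyMeasurable hm hW hW_int]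
  · refine ⟨fun h ↦ absurd ?_ hT, fun h ↦ absurd ?_ hW_int⟩
    · have hnot : ¬Integrable (fun ω ↦ V ω + Z ω - W ω) P := fun hint ↦ hW_int <|
        ((hV_int.add hZ_int).sub hint).congr (ae_of_all _ fun ω ↦ by
          simp only [Pi.add_apply, Pi.sub_apply]
          ring)
      exact h.symm.trans (condExp_of_not_integrable hnot).eventuallyEq
    · refine ((hV_int.add (integrable_condExp (m := m) (f := Z))).sub hT_int).congr ?_
      filter_upwards [h] with ω hω
      simp only [Pi.add_apply, Pi.sub_apply, ← hω]
      ring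

end CondExp

section ConditionallyGaussian

variable {Ω E : Type*} {m0 : MeasurableSpace Ω} {mE : MeasurableSpace E} {P : Measure Ω}
  [IsFiniteMeasure P] {Y : Ω → E} {X : Ω → ℝ} {m a : E → ℝ} {v : ℝ≥0} {σ : ℝ}

lemma condExp_mul_exp_ae_eq_of_condDistrib (hY : Measurable Y) (hX : AEMeasurable X P)
    (hGauss : ∀ᵐ ω ∂P, condDistrib X Y P (Y ω) = gaussianReal (m (Y ω)) v) (ha : Measurable a)
    (h_int : Integrable (fun ω ↦ a (Y ω) * exp (σ * X ω)) P) :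
    P[fun ω ↦ a (Y ω) * exp (σ * X ω)|mE.comap Y]
      =ᵐ[P] fun ω ↦ a (Y ω) * exp (σ * m (Y ω) + σ ^ 2 * v / 2) := by
  filter_upwards [condExp_comp_prodMk_ae_eq_integral (κ := fun e ↦ gaussianReal (m e) v)
    (f := fun p ↦ a p.1 * exp (σ * p.2)) hY hX hGauss (by fun_prop) h_int] with ω h
  rw [h, integral_const_mul, ← mgf, mgf_fun_id_gaussianReal]
  ring_nf

lemma condExp_max_mul_exp_sub_ae_eq_of_condDistrib (hY : Measurable Y) (hX : AEMeasurable X P)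
    (hGauss : ∀ᵐ ω ∂P, condDistrib X Y P (Y ω) = gaussianReal (m (Y ω)) v) (hv : v ≠ 0)
    (ha : Measurable a) (ha_pos : ∀ᵐ ω ∂P, 0 < a (Y ω)) (hσ : 0 < σ) {K : ℝ} (hK : 0 < K)
    (h_int : Integrable (fun ω ↦ a (Y ω) * exp (σ * X ω)) P) :
    P[fun ω ↦ max (a (Y ω) * exp (σ * X ω) - K) 0|mE.comap Y]
      =ᵐ[P] fun ω ↦ gaussianCallPrice (a (Y ω)) σ K (m (Y ω)) v := by
  filter_upwards [condExp_comp_prodMk_ae_eq_integral (κ := fun e ↦ gaussianReal (m e) v)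
    (f := fun p ↦ max (a p.1 * exp (σ * p.2) - K) 0) hY hX hGauss (by fun_prop)
    (h_int.sub (integrable_const K)).pos_part, ha_pos] with ω h hpos
  rw [h, integral_max_mul_exp_sub_gaussianReal hv hpos hσ hK]

end ConditionallyGaussian

theorem conditional_mean_hedging_european_call_general
    {Ω : Type*} {m0 : MeasurableSpace Ω} {P : Measure Ω} [IsProbabilityMeasure P]
    {E : Type*} {mE : MeasurableSpace E}
    (Y : Ω → E) (hY : Measurable Y)
    (X : Ω → ℝ) (hX : Measurable X)
    (m : E → ℝ) (v : ℝ≥0) (hv : 0 < v)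
    (hGauss : ∀ᵐ ω ∂P, condDistrib X Y P (Y ω) = gaussianReal (m (Y ω)) v)
    (σ K : ℝ) (hσ : 0 < σ) (hK : 0 < K) {k : ℝ}
    (Si Vk pi piPrev : Ω → ℝ)
    (hSi : Measurable[MeasurableSpace.comap Y mE] Si)
    (hVk : Measurable[MeasurableSpace.comap Y mE] Vk)
    (hpi : Measurable[MeasurableSpace.comap Y mE] pi)
    (hpiPrev : Measurable[MeasurableSpace.comap Y mE] piPrev)
    (hVkInt : Integrable Vk P)
    (a : E → ℝ) (ha : Measurable a) (haPos : ∀ᵐ ω ∂P, 0 < a (Y ω))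
    (Si1 : Ω → ℝ) (hSi1 : ∀ ω, Si1 ω = a (Y ω) * Real.exp (σ * X ω))
    (hSi1Int : Integrable Si1 P)
    (hpiSi1Int : Integrable (fun ω => pi ω * Si1 ω) P)
    (Vk1 : Ω → ℝ)
    (hVk1 : ∀ ω, Vk1 ω = Vk ω + pi ω * (Si1 ω - Si ω) - k * Si ω * |pi ω - piPrev ω|) :
    (P[Vk1|MeasurableSpace.comap Y mE]) =ᵐ[P]
        (P[fun ω => max (Si1 ω - K) 0|MeasurableSpace.comap Y mE]) ↔
      ∀ᵐ ω ∂P,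
        pi ω * (a (Y ω) * Real.exp (σ * m (Y ω) + σ ^ 2 * (v : ℝ) / 2) - Si ω) =
          a (Y ω) * Real.exp (σ * m (Y ω) + σ ^ 2 * (v : ℝ) / 2) *
              stdNormalCDF ((Real.log (a (Y ω) / K) + σ * m (Y ω)) / (σ * Real.sqrt v)
                + σ * Real.sqrt v)
            - K * stdNormalCDF ((Real.log (a (Y ω) / K) + σ * m (Y ω)) / (σ * Real.sqrt v))
            - Vk ω + k * Si ω * |pi ω - piPrev ω| := by
  obtain rfl : Si1 = fun ω ↦ a (Y ω) * exp (σ * X ω) := funext hSi1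
  obtain rfl : Vk1 = _ := funext hVk1
  have hpiS : P[fun ω ↦ pi ω * (a (Y ω) * exp (σ * X ω))|mE.comap Y]
      =ᵐ[P] fun ω ↦ pi ω * (a (Y ω) * exp (σ * m (Y ω) + σ ^ 2 * v / 2)) :=
    (condExp_mul_of_stronglyMeasurable_left hpi.stronglyMeasurable hpiSi1Int hSi1Int).trans
      ((condExp_mul_exp_ae_eq_of_condDistrib hY hX.aemeasurable hGauss ha hSi1Int).mono
        fun ω h ↦ by rw [Pi.mul_apply, h])
  have hcall := condExp_max_mul_exp_sub_ae_eq_of_condDistrib hY hX.aemeasurable hGauss hv.ne' ha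
    haPos hσ hK hSi1Int
  have hcall_ne : ¬P[fun ω ↦ max (a (Y ω) * exp (σ * X ω) - K) 0|mE.comap Y] =ᵐ[P] 0 := by
    intro h0
    obtain ⟨ω, h, hpos⟩ := ((h0.symm.trans hcall).and haPos).exists
    exact (gaussianCallPrice_pos hv.ne' hpos hσ hK).ne h
  have hW : StronglyMeasurable[mE.comap Y] fun ω ↦ pi ω * Si ω + k * Si ω * |pi ω - piPrev ω| :=
    by fun_prop
  rw [show (fun ω ↦ Vk ω + pi ω * (a (Y ω) * exp (σ * X ω) - Si ω) - k * Si ω * |pi ω - piPrev ω|)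
      = fun ω ↦ Vk ω + pi ω * (a (Y ω) * exp (σ * X ω))
        - (pi ω * Si ω + k * Si ω * |pi ω - piPrev ω|) from funext fun ω ↦ by ring,
    condExp_add_sub_ae_eq_iff hY.comap_le hVk.stronglyMeasurable hVkInt hpiSi1Int hW
      integrable_condExp hcall_ne, hcall.congr_right]
  constructor <;> intro h <;> filter_upwards [h, hpiS] with ω hω hpiSω <;>
    simp only [hpiSω, gaussianCallPrice] at hω ⊢ <;> linarith

/-- **Conditional-mean hedging of a European call option (Corollary 3.4).**
With `G = σ(Y)`, conditionally Gaussian log-returns, next asset price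
`S_{i+1} = a(Y)·exp(σX)`, and one-step transaction-cost portfolio value
`Vk1 = Vk + π·(S_{i+1} − S_i) − k·S_i·|π − π_prev|`, the conditional-mean hedging
condition `E[Vk1 | G] = E[(S_{i+1} − K)⁺ | G]` holds a.s. iff, a.s.,
`π·(Ŝ − S_i) = Ŝ·Φ(d⁺) − K·Φ(d⁻) − Vk + k·S_i·|π − π_prev|`,
where `Ŝ = a(Y)·exp(σ·m(Y) + σ²v/2)`, `d⁻ = (ln(a(Y)/K) + σ·m(Y))/(σ√v)`,
`d⁺ = d⁻ + σ√v`. -/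
theorem conditional_mean_hedging_european_call
    {Ω : Type*} {m0 : MeasurableSpace Ω} {P : Measure Ω} [IsProbabilityMeasure P]
    {E : Type*} {mE : MeasurableSpace E} [StandardBorelSpace E] [Nonempty E]
    (Y : Ω → E) (hY : Measurable Y)
    (X : Ω → ℝ) (hX : Measurable X)
    (m : E → ℝ) (hm : Measurable m) (v : ℝ≥0) (hv : 0 < v)
    (hGauss : ∀ᵐ ω ∂P, condDistrib X Y P (Y ω) = gaussianReal (m (Y ω)) v)
    (σ K : ℝ) (hσ : 0 < σ) (hK : 0 < K) {k : ℝ} (hk : k ∈ Set.Ico (0 : ℝ) 1)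
    (Si Vk pi piPrev : Ω → ℝ)
    (hSi : Measurable[MeasurableSpace.comap Y mE] Si)
    (hVk : Measurable[MeasurableSpace.comap Y mE] Vk)
    (hpi : Measurable[MeasurableSpace.comap Y mE] pi)
    (hpiPrev : Measurable[MeasurableSpace.comap Y mE] piPrev)
    (hSiInt : Integrable Si P) (hVkInt : Integrable Vk P)
    (hpiInt : Integrable pi P) (hpiPrevInt : Integrable piPrev P)
    (hSiPos : ∀ᵐ ω ∂P, 0 < Si ω)
    (a : E → ℝ) (ha : Measurable a) (haPos : ∀ᵐ ω ∂P, 0 < a (Y ω))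
    (Si1 : Ω → ℝ) (hSi1 : ∀ ω, Si1 ω = a (Y ω) * Real.exp (σ * X ω))
    (hSi1Int : Integrable Si1 P)
    (hpiSi1Int : Integrable (fun ω => pi ω * Si1 ω) P)
    (hCallInt : Integrable (fun ω => max (Si1 ω - K) 0) P)
    (Vk1 : Ω → ℝ)
    (hVk1 : ∀ ω, Vk1 ω = Vk ω + pi ω * (Si1 ω - Si ω) - k * Si ω * |pi ω - piPrev ω|) :
    (P[Vk1|MeasurableSpace.comap Y mE]) =ᵐ[P]
        (P[fun ω => max (Si1 ω - K) 0|MeasurableSpace.comap Y mE]) ↔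
      ∀ᵐ ω ∂P,
        pi ω * (a (Y ω) * Real.exp (σ * m (Y ω) + σ ^ 2 * (v : ℝ) / 2) - Si ω) =
          a (Y ω) * Real.exp (σ * m (Y ω) + σ ^ 2 * (v : ℝ) / 2) *
              stdNormalCDF ((Real.log (a (Y ω) / K) + σ * m (Y ω)) / (σ * Real.sqrt v)
                + σ * Real.sqrt v)
            - K * stdNormalCDF ((Real.log (a (Y ω) / K) + σ * m (Y ω)) / (σ * Real.sqrt v))
            - Vk ω + k * Si ω * |pi ω - piPrev ω| :=
  conditional_mean_hedging_european_call_general (m0 := m0) Y hY X hX m v hv hGauss σ K hσ hK Si Vk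
    pi piPrev hSi hVk hpi hpiPrev hVkInt a ha haPos Si1 hSi1 hSi1Int hpiSi1Int Vk1 hVk1
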